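/- Let R be a commutative ring that is a finitely generated Z-algebra and let m be a maximal ideal of R. Then the residue field R/m is a finite field. -/

import Mathlib

/-! `ℤ` is a Jacobson ring, so by Zariski's lemma the field `R ⧸ m`, being of finite type over `ℤ`,
is a finite `ℤ`-module. Such a field cannot have characteristic zero, since then it would be an
integral extension of `ℤ` and `ℤ` would be a field; so it has prime characteristic `p` and is a
finite-dimensional vector space over `ZMod p`. -/

theorem isJacobsonRing_of_dimensionLEOne {A : Type*} [CommRing A] [Ring.DimensionLEOne A]
    (hA : (⊥ : Ideal A).jacobson = ⊥) : IsJacobsonRing A := by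
  rw [isJacobsonRing_iff_prime_eq]
  intro P hP
  rcases eq_or_ne P ⊥ with rfl | hP₀
  · exact hA
  · have := Ring.DimensionLEOne.maximalOfPrime hP₀ hP
    exact P.jacobson_eq_self_of_isMaximal

theorem Int.jacobson_bot : (⊥ : Ideal ℤ).jacobson = ⊥ := by
  refine le_bot_iff.mp fun x hx ↦ ?_
  rw [Ideal.mem_jacobson_bot] at hx
  have h₁ := Int.isUnit_iff.mp (hx 1)
  have h₂ := Int.isUnit_iff.mp (hx (-1))
  rw [Ideal.mem_bot]
  omega

instance Int.isJacobsonRing : IsJacobsonRing ℤ :=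
  isJacobsonRing_of_dimensionLEOne Int.jacobson_bot

theorem Field.finite_of_module_finite_int (K : Type*) [Field K] [Module.Finite ℤ K] :
    Finite K := by
  obtain ⟨p, hp⟩ := CharP.exists K
  rcases CharP.char_is_prime_or_zero K p with hprime | rfl
  · have : Fact p.Prime := ⟨hprime⟩
    let := ZMod.algebra K p
    have : Module.Finite (ZMod p) K := Module.Finite.of_restrictScalars_finite ℤ (ZMod p) K
    exact Module.finite_of_finite (ZMod p)
  · have : CharZero K := CharP.charP_to_charZero K
    exact absurd (isField_of_isIntegral_of_isField (FaithfulSMul.algebraMap_injective ℤ K)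
      (Field.toIsField K)) Int.not_isField

/-- Let `R` be a commutative ring that is a finitely generated `ℤ`-algebra and
`m` a maximal ideal of `R`. Then the residue field `R/m` is a finite field. -/
theorem residue_field_finite_of_finiteType_int
    (R : Type*) [CommRing R] [Algebra.FiniteType ℤ R]
    (m : Ideal R) [m.IsMaximal] :
    Finite (R ⧸ m) := by
  let := Ideal.Quotient.field m
  have : Module.Finite ℤ (R ⧸ m) := finite_of_finite_type_of_isJacobsonRing ℤ (R ⧸ m)
  exact Field.finite_of_module_finite_int (R ⧸ m)
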